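/- If f = ⊔_{i∈I} Σ_{j∈J_i} m_{i,j} is a PCL formula in full normal form with associated interactions a_{i,j}, then for every configuration γ ∈ C(P): γ ⊨ f if and only if there exists i ∈ I such that γ = {a_{i,j} | j ∈ J_i}. -/
import Mathlib


/-- Propositional Interaction Logic formulas over a port set `P`. -/
inductive PIL (P : Type) : Type
  | tt : PIL P
  | port : P → PIL P
  | neg : PIL P → PIL P
  | or : PIL P → PIL P → PIL P

/-- PIL conjunction, defined via de Morgan. -/
def PIL.and {P : Type} (φ ψ : PIL P) : PIL P := .neg (.or (.neg φ) (.neg ψ))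

/-- Satisfaction of a PIL formula by an interaction `a ⊆ P`. -/
def PIL.sat {P : Type} (a : Finset P) : PIL P → Prop
  | .tt => True
  | .port p => p ∈ a
  | .neg φ => ¬ PIL.sat a φ
  | .or φ ψ => PIL.sat a φ ∨ PIL.sat a ψ

/-- Conjunction of a list of PIL formulas. -/
def PIL.bigAnd {P : Type} : List (PIL P) → PIL P
  | [] => .tt
  | φ :: l => φ.and (PIL.bigAnd l)

/-- The characteristic monomial `m_a = ⋀_{p∈a} p ∧ ⋀_{p∉a} ¬p` of an interaction `a`. -/
noncomputable def charMono {P : Type} [Fintype P] [DecidableEq P] (a : Finset P) : PIL P :=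
  PIL.bigAnd (Finset.univ.toList.map fun p => if p ∈ a then PIL.port p else PIL.neg (PIL.port p))

/-- Propositional Configuration Logic formulas over a port set `P`. -/
inductive PCL (P : Type) : Type
  | tt : PCL P
  | pil : PIL P → PCL P
  | neg : PCL P → PCL P
  | union : PCL P → PCL P → PCL P
  | coal : PCL P → PCL P → PCL P

/-- Satisfaction of a PCL formula by a configuration `γ` (a set of interactions). -/
def PCL.sat {P : Type} [DecidableEq P] (γ : Finset (Finset P)) : PCL P → Prop
  | .tt => True
  | .pil φ => ∀ a ∈ γ, PIL.sat a φ
  | .neg f => ¬ PCL.sat γ f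
  | .union f g => PCL.sat γ f ∨ PCL.sat γ g
  | .coal f g => ∃ γ1 γ2 : Finset (Finset P), γ1.Nonempty ∧ γ2.Nonempty ∧
      γ = γ1 ∪ γ2 ∧ PCL.sat γ1 f ∧ PCL.sat γ2 g

/-- PCL intersection `f1 ⊓ f2 := ¬(¬f1 ⊔ ¬f2)`. -/
def PCL.inter {P : Type} (f g : PCL P) : PCL P := .neg (.union (.neg f) (.neg g))

/-- PCL closure `~f := f + true`. -/
def PCL.closure {P : Type} (f : PCL P) : PCL P := .coal f .tt

/-- Semantic equivalence of PCL formulas: same satisfaction over all `γ ∈ C(P)`. -/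
def PCL.equiv {P : Type} [DecidableEq P] (f g : PCL P) : Prop :=
  ∀ γ : Finset (Finset P), γ.Nonempty → (∀ a ∈ γ, a.Nonempty) →
    (PCL.sat γ f ↔ PCL.sat γ g)

/-- Coalescing sum of a nonempty list of PCL formulas (head `f`, tail `l`). -/
def PCL.bigCoal {P : Type} (f : PCL P) : List (PCL P) → PCL P
  | [] => f
  | g :: l => .coal f (PCL.bigCoal g l)

/-- Union of a nonempty list of PCL formulas (head `f`, tail `l`). -/
def PCL.bigUnion {P : Type} (f : PCL P) : List (PCL P) → PCL P
  | [] => f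
  | g :: l => .union f (PCL.bigUnion g l)

/-- The coalescing sum `Σ_j m_{a_j}` of full monomials associated to the
nonempty list of interactions `a :: l`. -/
noncomputable def coalSum {P : Type} [Fintype P] [DecidableEq P] (a : Finset P) (l : List (Finset P)) : PCL P :=
  PCL.bigCoal (.pil (charMono a)) (l.map fun b => .pil (charMono b))

/-- A formula in full normal form `⊔_i Σ_j m_{i,j}`, given by a nonempty list
`i0 :: L` of nonempty lists of interactions (each pair: head and tail). -/
noncomputable def fnf {P : Type} [Fintype P] [DecidableEq P] (i0 : Finset P × List (Finset P))
    (L : List (Finset P × List (Finset P))) : PCL P :=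
  PCL.bigUnion (coalSum i0.1 i0.2) (L.map fun i => coalSum i.1 i.2)


lemma PIL.sat_and {P : Type} (a : Finset P) (φ ψ : PIL P) :
    PIL.sat a (φ.and ψ) ↔ PIL.sat a φ ∧ PIL.sat a ψ := by
  simp only [PIL.and, PIL.sat]; tauto

lemma PIL.sat_bigAnd {P : Type} (a : Finset P) (l : List (PIL P)) :
    PIL.sat a (PIL.bigAnd l) ↔ ∀ φ ∈ l, PIL.sat a φ := by
  induction l with
  | nil => simp [PIL.bigAnd, PIL.sat]
  | cons φ l ih => simp [PIL.bigAnd, PIL.sat_and, ih]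

lemma sat_charMono {P : Type} [Fintype P] [DecidableEq P] (b a : Finset P) :
    PIL.sat b (charMono a) ↔ b = a := by
  rw [charMono, PIL.sat_bigAnd]
  constructor
  · intro h
    ext p
    have := h (if p ∈ a then PIL.port p else PIL.neg (PIL.port p))
      (by simp only [List.mem_map]; exact ⟨p, by simp [Finset.mem_toList]⟩)
    by_cases hp : p ∈ a <;> simp [hp, PIL.sat] at this ⊢ <;> tauto
  · rintro rfl φ hφ
    simp only [List.mem_map] at hφ
    obtain ⟨p, -, rfl⟩ := hφ
    by_cases hp : p ∈ b <;> simp [hp, PIL.sat]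

lemma sat_pil_charMono {P : Type} [Fintype P] [DecidableEq P]
    (γ : Finset (Finset P)) (a : Finset P) (hγ : γ.Nonempty) :
    PCL.sat γ (.pil (charMono a)) ↔ γ = {a} := by
  simp only [PCL.sat, sat_charMono]
  constructor
  · intro h
    obtain ⟨b, hb⟩ := hγ
    have := h b hb
    subst this
    apply Finset.eq_singleton_iff_nonempty_unique_mem.mpr ⟨⟨b, hb⟩, h⟩
  · rintro rfl b hb; simpa using hb

lemma sat_coalSum {P : Type} [Fintype P] [DecidableEq P]
    (a : Finset P) (l : List (Finset P)) (γ : Finset (Finset P)) (hγ : γ.Nonempty) :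
    PCL.sat γ (coalSum a l) ↔ γ = insert a l.toFinset := by
  induction l generalizing a γ with
  | nil =>
    simpa [coalSum, PCL.bigCoal] using sat_pil_charMono γ a hγ
  | cons b l ih =>
    have hunf : coalSum a (b :: l) = .coal (.pil (charMono a)) (coalSum b l) := rfl
    rw [hunf]
    show (∃ γ1 γ2 : Finset (Finset P), γ1.Nonempty ∧ γ2.Nonempty ∧
      γ = γ1 ∪ γ2 ∧ PCL.sat γ1 (.pil (charMono a)) ∧ PCL.sat γ2 (coalSum b l)) ↔ _
    constructor
    · rintro ⟨γ1, γ2, h1, h2, rfl, hs1, hs2⟩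
      rw [sat_pil_charMono γ1 a h1] at hs1
      rw [ih b γ2 h2] at hs2
      subst hs1; subst hs2
      ext x; simp; tauto
    · intro h
      refine ⟨{a}, insert b l.toFinset, ⟨a, by simp⟩, ⟨b, by simp⟩, ?_, ?_, ?_⟩
      · rw [h]; ext x; simp; tauto
      · exact (sat_pil_charMono {a} a ⟨a, by simp⟩).mpr rfl
      · exact (ih b _ ⟨b, by simp⟩).mpr rfl

lemma sat_fnf_aux {P : Type} [Fintype P] [DecidableEq P]
    (i0 : Finset P × List (Finset P)) (L : List (Finset P × List (Finset P)))
    (γ : Finset (Finset P)) (hγ : γ.Nonempty) :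
    PCL.sat γ (fnf i0 L) ↔ ∃ i ∈ i0 :: L, γ = insert i.1 i.2.toFinset := by
  induction L generalizing i0 with
  | nil =>
    simp only [fnf, List.map_nil, PCL.bigUnion, List.mem_cons, List.not_mem_nil,
      or_false, exists_eq_left]
    exact sat_coalSum i0.1 i0.2 γ hγ
  | cons j L ih =>
    have hunf : fnf i0 (j :: L) = .union (coalSum i0.1 i0.2) (fnf j L) := rfl
    rw [hunf]
    show PCL.sat γ (coalSum i0.1 i0.2) ∨ PCL.sat γ (fnf j L) ↔ _
    rw [sat_coalSum i0.1 i0.2 γ hγ, ih j]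
    simp only [List.mem_cons]
    constructor
    · rintro (h | ⟨i, hi, h⟩)
      · exact ⟨i0, Or.inl rfl, h⟩
      · exact ⟨i, Or.inr hi, h⟩
    · rintro ⟨i, (rfl | hi), h⟩
      · exact Or.inl h
      · exact Or.inr ⟨i, hi, h⟩

theorem sat_fnf_iff {P : Type} [Fintype P] [DecidableEq P]
    (i0 : Finset P × List (Finset P)) (L : List (Finset P × List (Finset P)))
    (hne : ∀ i ∈ i0 :: L, i.1.Nonempty ∧ ∀ b ∈ i.2, b.Nonempty)
    (γ : Finset (Finset P)) (hγ : γ.Nonempty) (hI : ∀ b ∈ γ, b.Nonempty) :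
    PCL.sat γ (fnf i0 L) ↔ ∃ i ∈ i0 :: L, γ = insert i.1 i.2.toFinset :=
  sat_fnf_aux i0 L γ hγ
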